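/- For integers h ≥ 1 and real q > 1, ∑_{j=0}^{h-1} 1/(1 - q^{j-h}) ≤ h + q^{-1}/(1 - q^{-1}) + log_q((1 - q^{-h})/(1 - q^{-1})). -/

import Mathlib

/-!
With `r = q⁻¹`, reversing the order of summation turns the sum into `∑_{k=1}^{h} 1/(1 - r^k)`,
which is `h + ∑_{k=1}^{h} r^k/(1 - r^k)`. The term `k = 1` is `q⁻¹/(1 - q⁻¹)`, and every later
term is bounded by a telescoping difference:
`r^k/(1 - r^k) · log q ≤ log (1 - r^k) - log (1 - r^(k-1))`, which follows from
`log q ≤ q - 1` and `1 - t⁻¹ ≤ log t`. The telescoped sum is `log_q ((1 - r^h)/(1 - r))`.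
-/

open Finset Real

lemma sum_range_zpow_sub_eq_sum_range_inv_pow {K : Type*} [DivisionRing K] {M : Type*}
    [AddCommMonoid M] (f : K → M) (q : K) (h : ℕ) :
    ∑ j ∈ range h, f (q ^ ((j : ℤ) - h)) = ∑ k ∈ range h, f (q⁻¹ ^ (k + 1)) := by
  rw [← sum_range_reflect]
  refine sum_congr rfl fun j hj => ?_
  have hjh : j < h := mem_range.mp hj
  have hexp : ((h - 1 - j : ℕ) : ℤ) - h = -((j + 1 : ℕ) : ℤ) := by
    push_cast [Nat.cast_sub (by omega : 1 ≤ h), Nat.cast_sub (by omega : j ≤ h - 1)]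
    ring
  rw [hexp, zpow_neg, zpow_natCast, inv_pow]

lemma mul_log_le_log_one_sub_sub_log_one_sub_mul {q x : ℝ} (hq : 0 < q) (hx₀ : 0 ≤ x)
    (hx₁ : x < 1) (hqx : q * x < 1) :
    x / (1 - x) * log q ≤ log (1 - x) - log (1 - q * x) := by
  have h1x : 0 < 1 - x := by linarith
  have h1qx : 0 < 1 - q * x := by linarith
  rw [← log_div h1x.ne' h1qx.ne']
  calc x / (1 - x) * log q ≤ x / (1 - x) * (q - 1) := by
        gcongr
        exact log_le_sub_one_of_pos hq
    _ = 1 - ((1 - x) / (1 - q * x))⁻¹ := by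
        field_simp
        ring
    _ ≤ log ((1 - x) / (1 - q * x)) := one_sub_inv_le_log_of_pos (by positivity)

lemma sum_range_inv_pow_div_mul_log_le {q : ℝ} (hq : 1 < q) (n : ℕ) :
    (∑ k ∈ range n, q⁻¹ ^ (k + 2) / (1 - q⁻¹ ^ (k + 2))) * log q
      ≤ log (1 - q⁻¹ ^ (n + 1)) - log (1 - q⁻¹) := by
  have hq₀ : 0 < q := zero_lt_one.trans hq
  have hr₁ : q⁻¹ < 1 := inv_lt_one_of_one_lt₀ hq
  have hstep (k : ℕ) : q⁻¹ ^ (k + 2) / (1 - q⁻¹ ^ (k + 2)) * log q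
      ≤ log (1 - q⁻¹ ^ (k + 1 + 1)) - log (1 - q⁻¹ ^ (k + 1)) := by
    have hshift : q * q⁻¹ ^ (k + 2) = q⁻¹ ^ (k + 1) := by
      rw [pow_succ' _ (k + 1), mul_inv_cancel_left₀ hq₀.ne']
    have hlt (m : ℕ) : q⁻¹ ^ (m + 1) < 1 := pow_lt_one₀ (by positivity) hr₁ (by omega)
    have := mul_log_le_log_one_sub_sub_log_one_sub_mul hq₀ (by positivity) (hlt (k + 1))
      (hshift ▸ hlt k)
    rwa [hshift] at this
  calc (∑ k ∈ range n, q⁻¹ ^ (k + 2) / (1 - q⁻¹ ^ (k + 2))) * log q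
      ≤ ∑ k ∈ range n, (log (1 - q⁻¹ ^ (k + 1 + 1)) - log (1 - q⁻¹ ^ (k + 1))) := by
        rw [sum_mul]
        exact sum_le_sum fun k _ => hstep k
    _ = log (1 - q⁻¹ ^ (n + 1)) - log (1 - q⁻¹) := by
        rw [sum_range_sub (fun k => log (1 - q⁻¹ ^ (k + 1)))]
        simp

lemma sum_range_one_div_one_sub_inv_pow_le {q : ℝ} (hq : 1 < q) (h : ℕ) :
    ∑ k ∈ range h, 1 / (1 - q⁻¹ ^ (k + 1))
      ≤ h + q⁻¹ / (1 - q⁻¹) + logb q ((1 - q⁻¹ ^ h) / (1 - q⁻¹)) := by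
  have hr₁ : q⁻¹ < 1 := inv_lt_one_of_one_lt₀ hq
  have hpos (k : ℕ) : 0 < 1 - q⁻¹ ^ (k + 1) :=
    sub_pos.mpr (pow_lt_one₀ (by positivity) hr₁ (by omega))
  cases h with
  | zero =>
    have : 0 < 1 - q⁻¹ := by linarith
    simp only [range_zero, sum_empty, CharP.cast_eq_zero, pow_zero, sub_self, zero_div, logb_zero]
    positivity
  | succ n =>
    have hsplit (k : ℕ) : 1 / (1 - q⁻¹ ^ (k + 1)) = 1 + q⁻¹ ^ (k + 1) / (1 - q⁻¹ ^ (k + 1)) := by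
      rw [one_add_div (hpos k).ne', sub_add_cancel]
    have htail := sum_range_inv_pow_div_mul_log_le hq n
    rw [← le_div_iff₀ (log_pos hq)] at htail
    rw [logb, log_div (hpos n).ne' (by linarith), sum_congr rfl fun k _ => hsplit k,
      sum_add_distrib, sum_range_succ' (fun k => q⁻¹ ^ (k + 1) / (1 - q⁻¹ ^ (k + 1)))]
    simp only [sum_const, card_range, nsmul_eq_mul, mul_one, zero_add, pow_one]
    push_cast
    linarith

theorem stmt_2_general (q : ℝ) (hq : 1 < q) (h : ℕ) :
    ∑ j ∈ Finset.range h, 1 / (1 - q ^ ((j : ℤ) - (h : ℤ)))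
      ≤ (h : ℝ) + q⁻¹ / (1 - q⁻¹)
          + Real.logb q ((1 - q ^ (-(h : ℤ))) / (1 - q⁻¹)) := by
  rw [sum_range_zpow_sub_eq_sum_range_inv_pow (fun x => 1 / (1 - x)), zpow_neg, zpow_natCast,
    ← inv_pow]
  exact sum_range_one_div_one_sub_inv_pow_le hq h

/-- For integers `h ≥ 1` and real `q > 1`,
`∑_{j=0}^{h-1} 1/(1 - q^{j-h}) ≤ h + q⁻¹/(1 - q⁻¹) + log_q((1 - q^{-h})/(1 - q⁻¹))`. -/
theorem stmt_2 (q : ℝ) (hq : 1 < q) (h : ℕ) (hh : 1 ≤ h) :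
    ∑ j ∈ Finset.range h, 1 / (1 - q ^ ((j : ℤ) - (h : ℤ)))
      ≤ (h : ℝ) + q⁻¹ / (1 - q⁻¹)
          + Real.logb q ((1 - q ^ (-(h : ℤ))) / (1 - q⁻¹)) :=
  stmt_2_general q hq h
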